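/- arXiv:cs/0508129 — 3 statements merged into one kernel-verified Lean document; each statement's English description precedes it below -/
import Mathlib

section
/- Let Q be an IPSTN problem defined by a phylogeny ⟨V,E,I,S,f⟩ with root R and a function v ↦ (τ_min(v), τ_max(v)) assigning to each vertex an open interval. A set X of 2-element subsets of V↑ is a solution to Q if and only if (i) X is admissible, and (ii) there exists a real-valued function τ on V ∪ V_X such that (a) for every v ∈ V, τ_min(v) < τ(v) < τ_max(v); (b) for every v ∈ V \ {R}, τ(par(v)) < τ(v); (c) for every element v↑ of V_X, τ(par(v)) < τ(v↑) < τ(v); and (d) for every element {u↑, v↑} of X, τ(u↑) = τ(v↑). -/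
namespace Phylo

variable {α : Type*} {ι : Type*} {σ : Type*}

/-- `y` is reachable from `x` by a directed path along edges in `E`,
all of whose vertices belong to `W`. -/
def ReachableIn (E : Set (α × α)) (W : Set α) (x y : α) : Prop :=
  ∃ (n : ℕ) (p : ℕ → α), p 0 = x ∧ p n = y ∧ (∀ j ≤ n, p j ∈ W) ∧
    ∀ j < n, (p j, p (j + 1)) ∈ E

/-- `⟨V,E⟩` is a finite rooted tree with root `R`: a finite digraph with a vertex `R`
of in-degree 0 such that every vertex different from `R` has in-degree 1 and is
reachable from `R`. -/
structure IsRootedTree (V : Set α) (E : Set (α × α)) (R : α) : Prop where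
  finite : V.Finite
  edge_fst_mem : ∀ e ∈ E, e.1 ∈ V
  edge_snd_mem : ∀ e ∈ E, e.2 ∈ V
  edge_ne : ∀ e ∈ E, e.1 ≠ e.2
  root_mem : R ∈ V
  root_no_parent : ∀ u, (u, R) ∉ E
  parent_unique : ∀ v ∈ V, v ≠ R → ∃! u, (u, v) ∈ E
  root_reaches : ∀ v ∈ V, ReachableIn E V R v

/-- The digraph with edge set `F` has a subgraph with vertex set `W` that is
a rooted tree. -/
def HasRootedSubtree (F : Set (α × α)) (W : Set α) : Prop :=
  ∃ F' ⊆ F, (∀ e ∈ F', e.1 ∈ W ∧ e.2 ∈ W) ∧ ∃ r, IsRootedTree W F' r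

/-- `v` is a leaf of `⟨V,E⟩`: a vertex of out-degree 0. -/
def IsLeaf (V : Set α) (E : Set (α × α)) (v : α) : Prop :=
  v ∈ V ∧ ∀ u, (v, u) ∉ E

/-! Networks built from a set `X` of 2-element subsets of `V↑`.
A symbol `v↑` is represented by `Sum.inr v : α ⊕ α`, while a vertex `v` of the
tree is represented by `Sum.inl v`.  An unordered pair `{u↑, v↑}` is represented
by `s(u, v) : Sym2 α`. -/

/-- `V_X`: the union of the elements of `X`. -/
def VXset (X : Set (Sym2 α)) : Set α := {v | ∃ e ∈ X, v ∈ e}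

/-- Lateral edges of the network determined by `X`: the edges `⟨u↑, v↑⟩` and
`⟨v↑, u↑⟩` for `{u↑, v↑} ∈ X`. -/
def IsLateralEdgeX (X : Set (Sym2 α)) (e : (α ⊕ α) × (α ⊕ α)) : Prop :=
  ∃ u v, s(u, v) ∈ X ∧ e = (Sum.inr u, Sum.inr v)

/-- `E_X`: obtained from `E` by replacing, for each `v↑ ∈ V_X`, the edge
`⟨par v, v⟩` with `⟨par v, v↑⟩` and `⟨v↑, v⟩`, and adding, for each
`{u↑, v↑} ∈ X`, the lateral edges `⟨u↑, v↑⟩` and `⟨v↑, u↑⟩`. -/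
def EXset (E : Set (α × α)) (par : α → α) (X : Set (Sym2 α)) :
    Set ((α ⊕ α) × (α ⊕ α)) :=
  {e | (∃ u v, (u, v) ∈ E ∧ v ∉ VXset X ∧ e = (Sum.inl u, Sum.inl v)) ∨
       (∃ v ∈ VXset X, e = (Sum.inl (par v), Sum.inr v)) ∨
       (∃ v ∈ VXset X, e = (Sum.inr v, Sum.inl v)) ∨
       IsLateralEdgeX X e}

/-- The vertex set `V ∪ V_X` of the network determined by `X`. -/
def netVertsX (V : Set α) (X : Set (Sym2 α)) : Set (α ⊕ α) :=
  Sum.inl '' V ∪ Sum.inr '' VXset X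

/-- `X` is admissible: there is a function `g : (V ∪ V_X) × I → S` agreeing with
`f` on leaves such that every nonempty set `V_is = {x : g(x,i) = s}` carries a
rooted subtree of the network `⟨V ∪ V_X, E_X⟩`. -/
def Admissible (V : Set α) (E : Set (α × α)) (par : α → α)
    (f : α → ι → σ) (X : Set (Sym2 α)) : Prop :=
  ∃ g : α ⊕ α → ι → σ,
    (∀ v, IsLeaf V E v → ∀ i, g (Sum.inl v) i = f v i) ∧
    ∀ i s, ({x ∈ netVertsX V X | g x i = s}).Nonempty →
      HasRootedSubtree (EXset E par X) {x ∈ netVertsX V X | g x i = s}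

/-! Events, contacts and the networks they determine.  An event `v↑t` is
represented by the pair `(v, t) : α × ℝ`; in a network it appears as
`Sum.inr (v, t) : α ⊕ (α × ℝ)`. -/

/-- `(v, t)` is an event of the temporal phylogeny with time function `τ`:
`v ∈ V \ {R}` and `τ(par v) < t ≤ τ(v)`. -/
def IsEvent (V : Set α) (R : α) (par : α → α) (τ : α → ℝ) (p : α × ℝ) : Prop :=
  p.1 ∈ V ∧ p.1 ≠ R ∧ τ (par p.1) < p.2 ∧ p.2 ≤ τ p.1

/-- A contact: a set of two different concurrent events. -/
def IsContact (V : Set α) (R : α) (par : α → α) (τ : α → ℝ)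
    (c : Sym2 (α × ℝ)) : Prop :=
  ¬ c.IsDiag ∧ (∀ p ∈ c, IsEvent V R par τ p) ∧ ∀ p ∈ c, ∀ q ∈ c, p.2 = q.2

/-- `V_C`: the union of the contacts in `C`. -/
def VCset (C : Set (Sym2 (α × ℝ))) : Set (α × ℝ) := {p | ∃ c ∈ C, p ∈ c}

/-- `C` is a simple set of contacts for the temporal phylogeny with time
function `τ`: a finite set of contacts such that `t < τ(v)` for every event
`v↑t` in `V_C`, and for every vertex `v` there is at most one `t` with
`v↑t ∈ V_C`. -/
def SimpleContacts (V : Set α) (R : α) (par : α → α) (τ : α → ℝ)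
    (C : Set (Sym2 (α × ℝ))) : Prop :=
  C.Finite ∧ (∀ c ∈ C, IsContact V R par τ c) ∧
    (∀ p ∈ VCset C, p.2 < τ p.1) ∧
    ∀ v t t', (v, t) ∈ VCset C → (v, t') ∈ VCset C → t = t'

/-- Lateral edges of the network determined by `C`. -/
def IsLateralEdgeC (C : Set (Sym2 (α × ℝ)))
    (e : (α ⊕ (α × ℝ)) × (α ⊕ (α × ℝ))) : Prop :=
  ∃ p q, s(p, q) ∈ C ∧ e = (Sum.inr p, Sum.inr q)

/-- `E_C`: obtained from `E` by replacing, for each event `v↑t ∈ V_C`, the edge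
`⟨par v, v⟩` with `⟨par v, v↑t⟩` and `⟨v↑t, v⟩`, and adding, for each contact
`{u↑t, v↑t} ∈ C`, the lateral edges `⟨u↑t, v↑t⟩` and `⟨v↑t, u↑t⟩`. -/
def ECset (E : Set (α × α)) (par : α → α) (C : Set (Sym2 (α × ℝ))) :
    Set ((α ⊕ (α × ℝ)) × (α ⊕ (α × ℝ))) :=
  {e | (∃ u v, (u, v) ∈ E ∧ (∀ t, (v, t) ∉ VCset C) ∧ e = (Sum.inl u, Sum.inl v)) ∨
       (∃ p ∈ VCset C, e = (Sum.inl (par p.1), Sum.inr p)) ∨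
       (∃ p ∈ VCset C, e = (Sum.inr p, Sum.inl p.1)) ∨
       IsLateralEdgeC C e}

/-- The vertex set `V ∪ V_C` of the network determined by `C`. -/
def netVertsC (V : Set α) (C : Set (Sym2 (α × ℝ))) : Set (α ⊕ (α × ℝ)) :=
  Sum.inl '' V ∪ Sum.inr '' VCset C

/-- `C` is perfect: there is `g : (V ∪ V_C) × I → S` agreeing with `f` on the
leaves such that every nonempty set `V_is = {x : g(x,i) = s}` carries a rooted
subtree of the network `⟨V ∪ V_C, E_C⟩`. -/
def PerfectContacts (V : Set α) (E : Set (α × α)) (par : α → α)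
    (f : α → ι → σ) (C : Set (Sym2 (α × ℝ))) : Prop :=
  ∃ g : α ⊕ (α × ℝ) → ι → σ,
    (∀ v, IsLeaf V E v → ∀ i, g (Sum.inl v) i = f v i) ∧
    ∀ i s, ({x ∈ netVertsC V C | g x i = s}).Nonempty →
      HasRootedSubtree (ECset E par C) {x ∈ netVertsC V C | g x i = s}

/-- The summary of a set of contacts: each event `v↑t` is replaced by `v↑`. -/
def summary (C : Set (Sym2 (α × ℝ))) : Set (Sym2 α) :=
  Sym2.map Prod.fst '' C

/-- `X` is a solution to the IPSTN problem given by the phylogeny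
`⟨V,E,I,S,f⟩` (with root `R` and parent function `par`) and the intervals
`(τmin v, τmax v)`: `X` is a set of 2-element subsets of `V↑` that is the
summary of a perfect simple set of contacts for a temporal phylogeny
`⟨V,E,I,S,f,τ⟩` with `τmin v < τ v < τmax v` for all `v ∈ V`. -/
def IsSolution (V : Set α) (E : Set (α × α)) (R : α) (par : α → α)
    (f : α → ι → σ) (τmin τmax : α → EReal) (X : Set (Sym2 α)) : Prop :=
  (∀ e ∈ X, ¬ e.IsDiag ∧ ∀ v ∈ e, v ∈ V ∧ v ≠ R) ∧
  ∃ τ : α → ℝ,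
    (∀ e ∈ E, τ e.1 < τ e.2) ∧
    (∀ v ∈ V, τmin v < (τ v : EReal) ∧ (τ v : EReal) < τmax v) ∧
    ∃ C : Set (Sym2 (α × ℝ)),
      SimpleContacts V R par τ C ∧ PerfectContacts V E par f C ∧ X = summary C

/-- Condition (ii) of Proposition 1: a real-valued function `τ` on `V ∪ V_X`
(represented as a function on `α ⊕ α`, with `Sum.inl v` standing for `v` and
`Sum.inr v` for `v↑`) satisfying (a)–(d). -/
def TimeAssignment (V : Set α) (R : α) (par : α → α)
    (τmin τmax : α → EReal) (X : Set (Sym2 α)) (τ : α ⊕ α → ℝ) : Prop :=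
  (∀ v ∈ V, τmin v < (τ (Sum.inl v) : EReal) ∧ (τ (Sum.inl v) : EReal) < τmax v) ∧
  (∀ v ∈ V, v ≠ R → τ (Sum.inl (par v)) < τ (Sum.inl v)) ∧
  (∀ v ∈ VXset X, τ (Sum.inl (par v)) < τ (Sum.inr v) ∧ τ (Sum.inr v) < τ (Sum.inl v)) ∧
  ∀ u v, s(u, v) ∈ X → τ (Sum.inr u) = τ (Sum.inr v)

/-! A simple set of contacts `C` meets every `v↑` of its summary `X` at a single time `t v`, so
`C` is recovered from `X` and `t` by stamping each `v↑` with `t v`. Stamping is an isomorphism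
of the network `⟨V ∪ V_X, E_X⟩` onto `⟨V ∪ V_C, E_C⟩`, and rooted subtrees transport along it in
both directions; hence `C` is perfect iff `X` is admissible. What remains of `C` being a simple set
of contacts are conditions (c) and (d) on `t`, and `τ` increasing along the edges of the tree is
condition (b). -/

section Transport

variable {β γ : Type*}

theorem ReachableIn.image {E : Set (β × β)} {W : Set β} {x y : β} (h : ReachableIn E W x y)
    (φ : β → γ) : ReachableIn (Prod.map φ φ '' E) (φ '' W) (φ x) (φ y) := by
  obtain ⟨n, p, h0, hn, hW, hE⟩ := h
  exact ⟨n, φ ∘ p, by simp [h0], by simp [hn], fun j hj => ⟨p j, hW j hj, rfl⟩,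
    fun j hj => ⟨(p j, p (j + 1)), hE j hj, rfl⟩⟩

theorem IsRootedTree.image {W : Set β} {F : Set (β × β)} {r : β} (h : IsRootedTree W F r)
    {φ : β → γ} (hφ : Set.InjOn φ W) : IsRootedTree (φ '' W) (Prod.map φ φ '' F) (φ r) where
  finite := h.finite.image φ
  edge_fst_mem := by
    rintro _ ⟨e, he, rfl⟩
    exact ⟨e.1, h.edge_fst_mem e he, rfl⟩
  edge_snd_mem := by
    rintro _ ⟨e, he, rfl⟩
    exact ⟨e.2, h.edge_snd_mem e he, rfl⟩
  edge_ne := by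
    rintro _ ⟨e, he, rfl⟩ heq
    exact h.edge_ne e he (hφ (h.edge_fst_mem e he) (h.edge_snd_mem e he) heq)
  root_mem := ⟨r, h.root_mem, rfl⟩
  root_no_parent := by
    rintro _ ⟨⟨u, v⟩, he, heq⟩
    obtain ⟨-, hvr⟩ := Prod.mk.inj heq
    obtain rfl : v = r := hφ (h.edge_snd_mem _ he) h.root_mem hvr
    exact h.root_no_parent u he
  parent_unique := by
    rintro _ ⟨v, hv, rfl⟩ hvr
    obtain ⟨u, hu, huniq⟩ := h.parent_unique v hv (ne_of_apply_ne φ hvr)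
    refine ⟨φ u, ⟨(u, v), hu, rfl⟩, ?_⟩
    rintro _ ⟨⟨u', v'⟩, he, heq⟩
    obtain ⟨rfl, hv'⟩ := Prod.mk.inj heq
    obtain rfl : v' = v := hφ (h.edge_snd_mem _ he) hv hv'
    rw [huniq u' he]
  root_reaches := by
    rintro _ ⟨v, hv, rfl⟩
    exact (h.root_reaches v hv).image φ

theorem HasRootedSubtree.image {F : Set (β × β)} {W : Set β} (h : HasRootedSubtree F W)
    {φ : β → γ} (hφ : Set.InjOn φ W) {F₂ : Set (γ × γ)} (hF : Set.MapsTo (Prod.map φ φ) F F₂) :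
    HasRootedSubtree F₂ (φ '' W) := by
  obtain ⟨F', hF'F, hF'W, r, htree⟩ := h
  refine ⟨Prod.map φ φ '' F', (hF.mono_left hF'F).image_subset, ?_, φ r, htree.image hφ⟩
  rintro _ ⟨e, he, rfl⟩
  exact ⟨⟨e.1, (hF'W e he).1, rfl⟩, ⟨e.2, (hF'W e he).2, rfl⟩⟩

def IsPerfectColouring (N : Set β) (F : Set (β × β)) (g : β → ι → σ) : Prop :=
  ∀ i s, {x ∈ N | g x i = s}.Nonempty → HasRootedSubtree F {x ∈ N | g x i = s}

theorem isPerfectColouring_image_iff {N : Set β} {F : Set (β × β)} {g : γ → ι → σ}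
    {ψ : β → γ} {φ : γ → β} (hφψ : Function.LeftInverse φ ψ) :
    IsPerfectColouring (ψ '' N) (Prod.map ψ ψ '' F) g ↔ IsPerfectColouring N F (g ∘ ψ) := by
  have hclass : ∀ i s, {y ∈ ψ '' N | g y i = s} = ψ '' {x ∈ N | g (ψ x) i = s} := by
    intro i s
    ext y
    constructor
    · rintro ⟨⟨x, hx, rfl⟩, hg⟩
      exact ⟨x, ⟨hx, hg⟩, rfl⟩
    · rintro ⟨x, ⟨hx, hg⟩, rfl⟩
      exact ⟨⟨x, hx, rfl⟩, hg⟩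
  have hφ : Set.InjOn φ (Set.range ψ) :=
    Set.LeftInvOn.injOn (f₁' := ψ) (by rintro _ ⟨a, rfl⟩; rw [hφψ a])
  have hmaps : Set.MapsTo (Prod.map φ φ) (Prod.map ψ ψ '' F) F := by
    rintro _ ⟨⟨a, b⟩, he, rfl⟩
    simpa [hφψ a, hφψ b] using he
  constructor
  · intro h i s hne
    have hsub := h i s (hclass i s ▸ hne.image ψ)
    rw [hclass] at hsub
    simpa [hφψ.image_image] using hsub.image (hφ.mono (Set.image_subset_range _ _)) hmaps
  · intro h i s hne
    rw [hclass] at hne ⊢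
    exact (h i s hne.of_image).image hφψ.injective.injOn (Set.mapsTo_image _ _)

end Transport

section Stamp

variable {V : Set α} {E : Set (α × α)} {R : α} {par : α → α} {X : Set (Sym2 α)} {t : α → ℝ}

def stamp (X : Set (Sym2 α)) (t : α → ℝ) : Set (Sym2 (α × ℝ)) :=
  Sym2.map (fun v => (v, t v)) '' X

def stampVertex (t : α → ℝ) : α ⊕ α → α ⊕ (α × ℝ) :=
  Sum.map id fun v => (v, t v)

def forgetTime : α ⊕ (α × ℝ) → α ⊕ α :=
  Sum.map id Prod.fst

theorem forgetTime_leftInverse_stampVertex (t : α → ℝ) :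
    Function.LeftInverse forgetTime (stampVertex t) := by
  rintro (v | v) <;> rfl

theorem summary_stamp (X : Set (Sym2 α)) (t : α → ℝ) : summary (stamp X t) = X := by
  simp [summary, stamp, Set.image_image, Sym2.map_map, Sym2.map_id']

theorem VCset_stamp : VCset (stamp X t) = (fun v => (v, t v)) '' VXset X := by
  ext p
  constructor
  · rintro ⟨_, ⟨e, he, rfl⟩, hp⟩
    obtain ⟨v, hv, rfl⟩ := Sym2.mem_map.1 hp
    exact ⟨v, ⟨e, he, hv⟩, rfl⟩
  · rintro ⟨v, ⟨e, he, hv⟩, rfl⟩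
    exact ⟨_, ⟨e, he, rfl⟩, Sym2.mem_map.2 ⟨v, hv, rfl⟩⟩

theorem mk_mem_stamp_iff {p q : α × ℝ} :
    s(p, q) ∈ stamp X t ↔ s(p.1, q.1) ∈ X ∧ p.2 = t p.1 ∧ q.2 = t q.1 := by
  constructor
  · rintro ⟨e, he, hpq⟩
    have hp : p ∈ Sym2.map (fun v => (v, t v)) e := hpq ▸ Sym2.mem_mk_left p q
    have hq : q ∈ Sym2.map (fun v => (v, t v)) e := hpq ▸ Sym2.mem_mk_right p q
    obtain ⟨u, -, rfl⟩ := Sym2.mem_map.1 hp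
    obtain ⟨v, -, rfl⟩ := Sym2.mem_map.1 hq
    obtain rfl : e = s(u, v) := Sym2.map.injective (fun _ _ h => congrArg Prod.fst h)
      (hpq.trans (Sym2.map_mk (fun v => (v, t v)) u v).symm)
    exact ⟨he, rfl, rfl⟩
  · rintro ⟨he, hp, hq⟩
    refine ⟨_, he, ?_⟩
    rw [Sym2.map_mk, ← hp, ← hq]

theorem netVertsC_stamp : netVertsC V (stamp X t) = stampVertex t '' netVertsX V X := by
  simp only [netVertsC, netVertsX, VCset_stamp, Set.image_union, Set.image_image, stampVertex,
    Sum.map_inl, Sum.map_inr, id]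

theorem ECset_stamp :
    ECset E par (stamp X t) = Prod.map (stampVertex t) (stampVertex t) '' EXset E par X := by
  ext e
  constructor
  · rw [ECset, VCset_stamp]
    rintro (⟨u, v, huv, hv, rfl⟩ | ⟨_, ⟨v, hv, rfl⟩, rfl⟩ | ⟨_, ⟨v, hv, rfl⟩, rfl⟩ |
      ⟨p, q, hpq, rfl⟩)
    · exact ⟨(.inl u, .inl v), Or.inl ⟨u, v, huv, fun hvX => hv (t v) ⟨v, hvX, rfl⟩, rfl⟩, rfl⟩
    · exact ⟨(.inl (par v), .inr v), Or.inr (Or.inl ⟨v, hv, rfl⟩), rfl⟩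
    · exact ⟨(.inr v, .inl v), Or.inr (Or.inr (Or.inl ⟨v, hv, rfl⟩)), rfl⟩
    · obtain ⟨huv, hp, hq⟩ := mk_mem_stamp_iff.1 hpq
      refine ⟨(.inr p.1, .inr q.1), Or.inr (Or.inr (Or.inr ⟨_, _, huv, rfl⟩)), ?_⟩
      simp [stampVertex, ← hp, ← hq]
  · rintro ⟨_, (⟨u, v, huv, hv, rfl⟩ | ⟨v, hv, rfl⟩ | ⟨v, hv, rfl⟩ | ⟨u, v, huv, rfl⟩), rfl⟩
    · refine Or.inl ⟨u, v, huv, fun t' hvt => hv ?_, rfl⟩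
      rw [VCset_stamp] at hvt
      obtain ⟨w, hw, hwv⟩ := hvt
      obtain rfl : w = v := congrArg Prod.fst hwv
      exact hw
    · exact Or.inr (Or.inl ⟨(v, t v), VCset_stamp ▸ ⟨v, hv, rfl⟩, rfl⟩)
    · exact Or.inr (Or.inr (Or.inl ⟨(v, t v), VCset_stamp ▸ ⟨v, hv, rfl⟩, rfl⟩))
    · exact Or.inr (Or.inr (Or.inr ⟨(u, t u), (v, t v), mk_mem_stamp_iff.2 ⟨huv, rfl, rfl⟩, rfl⟩))

theorem perfectContacts_stamp_iff {f : α → ι → σ} :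
    PerfectContacts V E par f (stamp X t) ↔ Admissible V E par f X := by
  have hinv := forgetTime_leftInverse_stampVertex t
  simp only [PerfectContacts, Admissible, netVertsC_stamp, ECset_stamp]
  constructor
  · rintro ⟨g, hleaf, hg⟩
    exact ⟨g ∘ stampVertex t, hleaf, (isPerfectColouring_image_iff hinv).1 hg⟩
  · rintro ⟨g, hleaf, hg⟩
    refine ⟨g ∘ forgetTime, hleaf, (isPerfectColouring_image_iff hinv).2 ?_⟩
    rwa [Function.comp_assoc, hinv.comp_eq_id, Function.comp_id]

theorem simpleContacts_stamp_iff {τ : α → ℝ} (hXfin : X.Finite)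
    (hX : ∀ e ∈ X, ¬ e.IsDiag ∧ ∀ v ∈ e, v ∈ V ∧ v ≠ R) :
    SimpleContacts V R par τ (stamp X t) ↔
      (∀ v ∈ VXset X, τ (par v) < t v ∧ t v < τ v) ∧ ∀ u v, s(u, v) ∈ X → t u = t v := by
  simp only [SimpleContacts, VCset_stamp, Set.forall_mem_image]
  constructor
  · rintro ⟨-, hcontact, hlt, -⟩
    refine ⟨fun v ⟨e, he, hv⟩ => ⟨?_, hlt ⟨e, he, hv⟩⟩, fun u v huv => ?_⟩
    · exact ((hcontact _ ⟨e, he, rfl⟩).2.1 (v, t v) (Sym2.mem_map.2 ⟨v, hv, rfl⟩)).2.2.1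
    · exact (hcontact _ ⟨_, huv, rfl⟩).2.2 (u, t u) (Sym2.mem_mk_left _ _) (v, t v)
        (Sym2.mem_mk_right _ _)
  · rintro ⟨hevent, hconc⟩
    refine ⟨hXfin.image _, ?_, fun v hv => (hevent v hv).2, ?_⟩
    · rintro _ ⟨e, he, rfl⟩
      refine ⟨(Sym2.isDiag_map fun _ _ h => congrArg Prod.fst h).not.2 (hX e he).1, ?_, ?_⟩
      · intro p hp
        obtain ⟨w, hw, rfl⟩ := Sym2.mem_map.1 hp
        obtain ⟨hwV, hwR⟩ := (hX e he).2 w hw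
        exact ⟨hwV, hwR, (hevent w ⟨e, he, hw⟩).1, (hevent w ⟨e, he, hw⟩).2.le⟩
      · induction e using Sym2.ind with
        | _ u v => simp [Sym2.mem_iff, hconc u v he]
    · rintro _ _ _ ⟨u, -, hu⟩ ⟨v, -, hv⟩
      simp only [Prod.mk.injEq] at hu hv
      rw [← hu.2, ← hv.2, hu.1, hv.1]

theorem exists_eq_stamp_of_summary {C : Set (Sym2 (α × ℝ))}
    (huniq : ∀ v t t', (v, t) ∈ VCset C → (v, t') ∈ VCset C → t = t') (hX : X = summary C) :
    ∃ t, C = stamp X t := by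
  classical
  let t v := if h : ∃ t, (v, t) ∈ VCset C then h.choose else 0
  have ht : ∀ p ∈ VCset C, t p.1 = p.2 := fun p hp =>
    have h : ∃ t, (p.1, t) ∈ VCset C := ⟨p.2, hp⟩
    (dif_pos h).trans (huniq _ _ _ h.choose_spec hp)
  refine ⟨t, ?_⟩
  rw [hX, stamp, summary, Set.image_image]
  refine ((Set.image_congr fun c hc => ?_).trans (Set.image_id' C)).symm
  rw [Sym2.map_map]
  refine (Sym2.map_congr fun p hp => ?_).trans (congrFun Sym2.map_id c)
  simp [ht p ⟨c, hc, hp⟩]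

end Stamp

protected theorem _root_.Set.Finite.sym2 {s : Set α} (hs : s.Finite) : s.sym2.Finite :=
  Set.sym2_eq_mk_image (s := s) ▸ (hs.prod hs).image _

theorem IsRootedTree.forall_edge_iff {V : Set α} {E : Set (α × α)} {R : α} {par : α → α}
    (hT : IsRootedTree V E R) (hpar : ∀ v ∈ V, v ≠ R → (par v, v) ∈ E) {P : α → α → Prop} :
    (∀ e ∈ E, P e.1 e.2) ↔ ∀ v ∈ V, v ≠ R → P (par v) v := by
  refine ⟨fun h v hv hvR => h _ (hpar v hv hvR), fun h ⟨u, v⟩ he => ?_⟩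
  have hv : v ∈ V := hT.edge_snd_mem _ he
  have hvR : v ≠ R := by
    rintro rfl
    exact hT.root_no_parent u he
  obtain ⟨w, -, huniq⟩ := hT.parent_unique v hv hvR
  rw [huniq u he, ← huniq _ (hpar v hv hvR)]
  exact h v hv hvR

theorem ipstn_solution_iff_admissible_and_timeAssignment_general
    {α ι σ : Type*}
    (V : Set α) (E : Set (α × α)) (R : α) (par : α → α) (f : α → ι → σ)
    (τmin τmax : α → EReal)
    (hT : IsRootedTree V E R)
    (hpar : ∀ v ∈ V, v ≠ R → (par v, v) ∈ E)
    (X : Set (Sym2 α))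
    (hX : ∀ e ∈ X, ¬ e.IsDiag ∧ ∀ v ∈ e, v ∈ V ∧ v ≠ R) :
    IsSolution V E R par f τmin τmax X ↔
      Admissible V E par f X ∧
        ∃ τ : α ⊕ α → ℝ, TimeAssignment V R par τmin τmax X τ := by
  have hXfin : X.Finite := hT.finite.sym2.subset fun e he =>
    Set.mem_sym2_iff_subset.2 fun v hv => ((hX e he).2 v hv).1
  constructor
  · rintro ⟨-, τ, hτE, hτint, C, hC, hperf, hXC⟩
    obtain ⟨t, rfl⟩ := exists_eq_stamp_of_summary hC.2.2.2 hXC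
    exact ⟨perfectContacts_stamp_iff.1 hperf, Sum.elim τ t, hτint,
      (hT.forall_edge_iff hpar (P := fun u v => τ u < τ v)).1 hτE,
      (simpleContacts_stamp_iff hXfin hX).1 hC⟩
  · rintro ⟨hadm, τ, hτint, hτpar, hτcontact⟩
    exact ⟨hX, τ ∘ Sum.inl,
      (hT.forall_edge_iff hpar (P := fun u v => τ (.inl u) < τ (.inl v))).2 hτpar, hτint,
      stamp X (τ ∘ Sum.inr), (simpleContacts_stamp_iff hXfin hX).2 hτcontact,
      perfectContacts_stamp_iff.2 hadm, (summary_stamp X _).symm⟩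

/-- Proposition 1.  A set `X` of 2-element subsets of `V↑` is
a solution to the IPSTN problem `Q` iff (i) `X` is admissible and (ii) there is
a real-valued function `τ` on `V ∪ V_X` satisfying (a)–(d). -/
theorem ipstn_solution_iff_admissible_and_timeAssignment
    {α ι σ : Type*} [Finite ι] [Finite σ]
    (V : Set α) (E : Set (α × α)) (R : α) (par : α → α) (f : α → ι → σ)
    (τmin τmax : α → EReal)
    (hT : IsRootedTree V E R)
    (hpar : ∀ v ∈ V, v ≠ R → (par v, v) ∈ E)
    (hint : ∀ v ∈ V, τmin v < τmax v)
    (X : Set (Sym2 α))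
    (hX : ∀ e ∈ X, ¬ e.IsDiag ∧ ∀ v ∈ e, v ∈ V ∧ v ≠ R) :
    IsSolution V E R par f τmin τmax X ↔
      Admissible V E par f X ∧
        ∃ τ : α ⊕ α → ℝ, TimeAssignment V R par τmin τmax X τ :=
  ipstn_solution_iff_admissible_and_timeAssignment_general V E R par f τmin τmax hT hpar X hX

end Phylo
end

section
/- Let T = ⟨V,E,I,S,f,τ⟩ be a temporal phylogeny and let C be a simple set of contacts for T. Extend τ to V ∪ V_C by setting τ(v↑t) = t for every event v↑t ∈ V_C. Then for every edge ⟨x,y⟩ of the network ⟨V ∪ V_C, E_C⟩, either ⟨x,y⟩ is a lateral edge and τ(x) = τ(y), or τ(x) < τ(y). Consequently, every directed cycle in the network ⟨V ∪ V_C, E_C⟩ consists entirely of lateral edges; in particular, no directed cycle of the network contains an edge derived from a tree edge of T. -/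
namespace Phylo

variable {α : Type*} {ι : Type*} {σ : Type*}

theorem not_lt_succ_of_le_succ_of_cycle {β : Type*} [Preorder β] {n : ℕ} {x : ℕ → β}
    (hcyc : x n = x 0) (hstep : ∀ j < n, x j ≤ x (j + 1)) {j : ℕ} (hj : j < n) :
    ¬ x j < x (j + 1) := by
  -- stopping `x` at `n` makes it monotone on all of `ℕ`
  have hmono : Monotone fun k => x (min k n) := monotone_nat_of_le_succ fun k => by
    rcases lt_or_ge k n with hk | hk
    · simpa [hk.le, Nat.succ_le_of_lt hk] using hstep k hk
    · simp [hk, hk.trans k.le_succ]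
  intro hlt
  have h0j : x 0 ≤ x j := by simpa [hj.le] using hmono (Nat.zero_le j)
  have hjn : x (j + 1) ≤ x n := by
    simpa [Nat.succ_le_of_lt hj] using hmono (Nat.succ_le_of_lt hj)
  exact lt_irrefl _ (h0j.trans_lt (hlt.trans_le (hjn.trans hcyc.le)))

theorem time_eq_of_isLateralEdgeC {V : Set α} {R : α} {par : α → α} {τ : α → ℝ}
    {C : Set (Sym2 (α × ℝ))} (hC : ∀ c ∈ C, IsContact V R par τ c)
    {e : (α ⊕ (α × ℝ)) × (α ⊕ (α × ℝ))} (he : IsLateralEdgeC C e) :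
    Sum.elim τ Prod.snd e.1 = Sum.elim τ Prod.snd e.2 := by
  obtain ⟨a, b, hab, rfl⟩ := he
  exact (hC _ hab).2.2 a (Sym2.mem_mk_left a b) b (Sym2.mem_mk_right a b)

theorem isLateralEdgeC_or_time_lt_of_mem_ECset {V : Set α} {E : Set (α × α)} {R : α}
    {par : α → α} {τ : α → ℝ} (hτ : ∀ e ∈ E, τ e.1 < τ e.2) {C : Set (Sym2 (α × ℝ))}
    (hC : SimpleContacts V R par τ C) {e : (α ⊕ (α × ℝ)) × (α ⊕ (α × ℝ))}
    (he : e ∈ ECset E par C) :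
    IsLateralEdgeC C e ∨ Sum.elim τ Prod.snd e.1 < Sum.elim τ Prod.snd e.2 := by
  rcases he with ⟨u, v, huv, -, rfl⟩ | ⟨q, ⟨c, hc, hqc⟩, rfl⟩ | ⟨q, hq, rfl⟩ | hlat
  · exact Or.inr (hτ _ huv)
  · exact Or.inr ((hC.2.1 c hc).2.1 q hqc).2.2.1
  · exact Or.inr (hC.2.2.1 q hq)
  · exact Or.inl hlat

theorem temporal_network_edges_monotone_and_cycles_lateral_general
    {α : Type*}
    (V : Set α) (E : Set (α × α)) (R : α) (par : α → α)
    (τ : α → ℝ)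
    (hτ : ∀ e ∈ E, τ e.1 < τ e.2)
    (C : Set (Sym2 (α × ℝ)))
    (hC : SimpleContacts V R par τ C) :
    (∀ e ∈ ECset E par C,
        (IsLateralEdgeC C e ∧
          Sum.elim τ Prod.snd e.1 = Sum.elim τ Prod.snd e.2) ∨
        Sum.elim τ Prod.snd e.1 < Sum.elim τ Prod.snd e.2) ∧
    ∀ (n : ℕ) (p : ℕ → α ⊕ (α × ℝ)), 0 < n → p n = p 0 →
      (∀ j < n, (p j, p (j + 1)) ∈ ECset E par C) →
      ∀ j < n, IsLateralEdgeC C (p j, p (j + 1)) := by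
  have hedge : ∀ e ∈ ECset E par C,
      (IsLateralEdgeC C e ∧ Sum.elim τ Prod.snd e.1 = Sum.elim τ Prod.snd e.2) ∨
        Sum.elim τ Prod.snd e.1 < Sum.elim τ Prod.snd e.2 := fun e he =>
    (isLateralEdgeC_or_time_lt_of_mem_ECset hτ hC he).imp_left fun hlat =>
      ⟨hlat, time_eq_of_isLateralEdgeC hC.2.1 hlat⟩
  refine ⟨hedge, fun n p _ hcyc hp j hj => ?_⟩
  have hstep : ∀ k < n, Sum.elim τ Prod.snd (p k) ≤ Sum.elim τ Prod.snd (p (k + 1)) :=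
    fun k hk => (hedge _ (hp k hk)).elim (fun h => h.2.le) le_of_lt
  refine (isLateralEdgeC_or_time_lt_of_mem_ECset hτ hC (hp j hj)).resolve_right ?_
  exact not_lt_succ_of_le_succ_of_cycle (x := fun k => Sum.elim τ Prod.snd (p k))
    (congrArg _ hcyc) hstep hj

/-- Let `T = ⟨V,E,I,S,f,τ⟩` be a temporal phylogeny and `C`
a simple set of contacts for `T`.  Extending `τ` to `V ∪ V_C` by
`τ(v↑t) = t` (i.e. using `Sum.elim τ Prod.snd`), every edge `⟨x,y⟩` of the
network `⟨V ∪ V_C, E_C⟩` is either a lateral edge with `τ(x) = τ(y)`, or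
satisfies `τ(x) < τ(y)`.  Consequently, every directed cycle of the network
consists entirely of lateral edges. -/
theorem temporal_network_edges_monotone_and_cycles_lateral
    {α ι σ : Type*} [Finite ι] [Finite σ]
    (V : Set α) (E : Set (α × α)) (R : α) (par : α → α) (f : α → ι → σ)
    (τ : α → ℝ)
    (hT : IsRootedTree V E R)
    (hpar : ∀ v ∈ V, v ≠ R → (par v, v) ∈ E)
    (hτ : ∀ e ∈ E, τ e.1 < τ e.2)
    (C : Set (Sym2 (α × ℝ)))
    (hC : SimpleContacts V R par τ C) :
    (∀ e ∈ ECset E par C,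
        (IsLateralEdgeC C e ∧
          Sum.elim τ Prod.snd e.1 = Sum.elim τ Prod.snd e.2) ∨
        Sum.elim τ Prod.snd e.1 < Sum.elim τ Prod.snd e.2) ∧
    ∀ (n : ℕ) (p : ℕ → α ⊕ (α × ℝ)), 0 < n → p n = p 0 →
      (∀ j < n, (p j, p (j + 1)) ∈ ECset E par C) →
      ∀ j < n, IsLateralEdgeC C (p j, p (j + 1)) :=
  temporal_network_edges_monotone_and_cycles_lateral_general V E R par τ hτ C hC

end Phylo
end

section
/- Let ⟨V,E⟩ be a finite rooted tree with root R, let X be a set of 2-element subsets of V↑ with |X| ≤ k, and let ⟨V ∪ V_X, E_X⟩ be the associated network, whose lateral edges are the pairs ⟨u↑,v↑⟩ and ⟨v↑,u↑⟩ for {u↑,v↑} ∈ X. Let W be a subset of V ∪ V_X and let x, y ∈ W. If y is reachable from x by a directed path in ⟨V ∪ V_X, E_X⟩ all of whose vertices belong to W, then y is reachable from x by such a path containing at most k lateral edges. -/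
namespace Phylo

variable {α : Type*} {ι : Type*} {σ : Type*}

/-! A shortest walk visits no vertex twice, so it crosses no unordered pair of vertices twice;
in particular each pair `{u↑, v↑} ∈ X` contributes at most one lateral edge to it. -/

section Walks

variable {β : Type*} {E : Set (β × β)} {W : Set β}

def IsWalkIn (E : Set (β × β)) (W : Set β) (n : ℕ) (p : ℕ → β) : Prop :=
  (∀ j ≤ n, p j ∈ W) ∧ ∀ j < n, (p j, p (j + 1)) ∈ E

/-- Cutting out the closed subwalk between the visits `i < j` of the same vertex. -/
lemma IsWalkIn.shortcut {n i j : ℕ} {p : ℕ → β} (hp : IsWalkIn E W n p)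
    (hij : i < j) (hjn : j ≤ n) (heq : p i = p j) :
    IsWalkIn E W (n - (j - i)) (fun t => p (if t ≤ i then t else t + (j - i))) := by
  refine ⟨fun t ht => hp.1 _ ?_, fun t ht => ?_⟩
  · split_ifs <;> omega
  · rcases lt_trichotomy t i with hti | rfl | hti
    · simpa [hti.le, Nat.succ_le_of_lt hti] using hp.2 t (by omega)
    · have hedge := hp.2 j (by omega)
      simp only [le_refl, if_true, if_neg (Nat.not_succ_le_self t)]
      rwa [heq, show t + 1 + (j - t) = j + 1 by omega]
    · simp only [if_neg (by omega : ¬ t ≤ i), if_neg (by omega : ¬ t + 1 ≤ i)]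
      rw [show t + 1 + (j - i) = t + (j - i) + 1 by omega]
      exact hp.2 _ (by omega)

lemma exists_injOn_walk {n : ℕ} {p : ℕ → β} (hp : IsWalkIn E W n p) :
    ∃ m q, q 0 = p 0 ∧ q m = p n ∧ IsWalkIn E W m q ∧ Set.InjOn q (Set.Iic m) := by
  induction n using Nat.strong_induction_on generalizing p with
  | _ n ih =>
    by_cases hinj : Set.InjOn p (Set.Iic n)
    · exact ⟨n, p, rfl, rfl, hp, hinj⟩
    have shorten : ∀ i j, i < j → j ≤ n → p i = p j →
        ∃ m q, q 0 = p 0 ∧ q m = p n ∧ IsWalkIn E W m q ∧ Set.InjOn q (Set.Iic m) := by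
      intro i j hij hjn heq
      obtain ⟨m, q, hq0, hqm, hq, hqinj⟩ :=
        ih (n - (j - i)) (by omega) (hp.shortcut hij hjn heq)
      refine ⟨m, q, by simpa using hq0, hqm.trans ?_, hq, hqinj⟩
      by_cases hend : n - (j - i) ≤ i
      · rw [if_pos hend, show n - (j - i) = i by omega, heq, show j = n by omega]
      · rw [if_neg hend, show n - (j - i) + (j - i) = n by omega]
    simp only [Set.InjOn, Set.mem_Iic, not_forall] at hinj
    obtain ⟨i, hin, j, hjn, heq, hne⟩ := hinj
    rcases Nat.lt_or_gt_of_ne hne with hij | hji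
    · exact shorten i j hij hjn heq
    · exact shorten j i hji hin heq.symm

lemma injOn_sym2_edges {m : ℕ} {q : ℕ → β} (hq : Set.InjOn q (Set.Iic m)) :
    Set.InjOn (fun j => s(q j, q (j + 1))) (Set.Iio m) := by
  intro i (hi : i < m) j (hj : j < m) hij
  have mem : ∀ t, t ≤ m → t ∈ Set.Iic m := fun _ => id
  rcases Sym2.eq_iff.mp hij with ⟨h, -⟩ | ⟨h₁, h₂⟩
  · exact hq (mem i hi.le) (mem j hj.le) h
  · have := hq (mem i hi.le) (mem (j + 1) hj) h₁
    have := hq (mem (i + 1) hi) (mem j hj.le) h₂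
    omega

end Walks

lemma ncard_lateralEdgeX_le {X : Set (Sym2 α)} (hX : X.Finite) {m : ℕ} {q : ℕ → α ⊕ α}
    (hq : Set.InjOn q (Set.Iic m)) :
    {j | j < m ∧ IsLateralEdgeX X (q j, q (j + 1))}.ncard ≤ X.ncard := by
  have maps : ∀ j ∈ {j | j < m ∧ IsLateralEdgeX X (q j, q (j + 1))},
      s(q j, q (j + 1)) ∈ Sym2.map Sum.inr '' X := by
    rintro j ⟨-, u, v, huv, he⟩
    simp only [Prod.mk.injEq] at he
    exact ⟨s(u, v), huv, by rw [he.1, he.2, Sym2.map_mk]⟩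
  calc {j | j < m ∧ IsLateralEdgeX X (q j, q (j + 1))}.ncard
      ≤ (Sym2.map Sum.inr '' X).ncard :=
        Set.ncard_le_ncard_of_injOn _ maps ((injOn_sym2_edges hq).mono fun _ hj => hj.1)
          (hX.image _)
    _ ≤ X.ncard := Set.ncard_image_le hX

theorem reachable_with_at_most_k_lateral_edges_general
    {α : Type*}
    (E : Set (α × α)) (par : α → α)
    (X : Set (Sym2 α))
    (k : ℕ) (hfin : X.Finite) (hcard : X.ncard ≤ k)
    (W : Set (α ⊕ α))
    (x y : α ⊕ α)
    (n : ℕ) (p : ℕ → α ⊕ α)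
    (hp0 : p 0 = x) (hpn : p n = y)
    (hpW : ∀ j ≤ n, p j ∈ W)
    (hpE : ∀ j < n, (p j, p (j + 1)) ∈ EXset E par X) :
    ∃ (m : ℕ) (q : ℕ → α ⊕ α),
      q 0 = x ∧ q m = y ∧ (∀ j ≤ m, q j ∈ W) ∧
      (∀ j < m, (q j, q (j + 1)) ∈ EXset E par X) ∧
      {j | j < m ∧ IsLateralEdgeX X (q j, q (j + 1))}.ncard ≤ k := by
  obtain ⟨m, q, hq0, hqm, hq, hinj⟩ :=
    exists_injOn_walk (E := EXset E par X) (W := W) ⟨hpW, hpE⟩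
  exact ⟨m, q, hq0.trans hp0, hqm.trans hpn, hq.1, hq.2,
    (ncard_lateralEdgeX_le hfin hinj).trans hcard⟩

/-- Let `⟨V,E⟩` be a finite rooted tree with root `R`, `X` a
set of 2-element subsets of `V↑` with `|X| ≤ k`, and `⟨V ∪ V_X, E_X⟩` the
associated network.  If `y` is reachable from `x` by a directed path all of
whose vertices belong to `W ⊆ V ∪ V_X`, then `y` is reachable from `x` by such
a path containing at most `k` lateral edges. -/
theorem reachable_with_at_most_k_lateral_edges
    {α : Type*}
    (V : Set α) (E : Set (α × α)) (R : α) (par : α → α)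
    (hT : IsRootedTree V E R)
    (hpar : ∀ v ∈ V, v ≠ R → (par v, v) ∈ E)
    (X : Set (Sym2 α))
    (hX : ∀ e ∈ X, ¬ e.IsDiag ∧ ∀ v ∈ e, v ∈ V ∧ v ≠ R)
    (k : ℕ) (hfin : X.Finite) (hcard : X.ncard ≤ k)
    (W : Set (α ⊕ α)) (hW : W ⊆ netVertsX V X)
    (x y : α ⊕ α) (hx : x ∈ W) (hy : y ∈ W)
    (n : ℕ) (p : ℕ → α ⊕ α)
    (hp0 : p 0 = x) (hpn : p n = y)
    (hpW : ∀ j ≤ n, p j ∈ W)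
    (hpE : ∀ j < n, (p j, p (j + 1)) ∈ EXset E par X) :
    ∃ (m : ℕ) (q : ℕ → α ⊕ α),
      q 0 = x ∧ q m = y ∧ (∀ j ≤ m, q j ∈ W) ∧
      (∀ j < m, (q j, q (j + 1)) ∈ EXset E par X) ∧
      {j | j < m ∧ IsLateralEdgeX X (q j, q (j + 1))}.ncard ≤ k :=
  reachable_with_at_most_k_lateral_edges_general E par X k hfin hcard W x y n p hp0 hpn hpW hpE

end Phylo
end
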